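/- Let z₁, z₂, z₃ be pairwise distinct complex numbers with Im j(z₁, z₂, z₃) ≠ 0, and let (a, b, c) be the labeling of the three points ordered by increasing lengths of the opposite sides, i.e., |b−c| < |c−a| < |a−b| (such a strict ordering exists since the side lengths are pairwise distinct when j is not real). Then Im j(z₁, z₂, z₃) > 0 if and only if Im((c−a)/(b−a)) > 0, i.e., if and only if the ordered triple (a, b, c) is positively oriented in ℂ. -/

import Mathlib

open Complex

/-- The j-invariant as a function of the cross-ratio. -/
noncomputable def Jfun (l : ℂ) : ℂ := 4 * (l ^ 2 - l + 1) ^ 3 / (27 * l ^ 2 * (l - 1) ^ 2)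

/-- The cross-ratio of four points of `ℂ`. -/
noncomputable def crossRatio (z1 z2 z3 z4 : ℂ) : ℂ :=
  ((z1 - z3) / (z2 - z3)) * ((z2 - z4) / (z1 - z4))

/-- The j-invariant of a quadruple of points of `ℂ`. -/
noncomputable def jInv4 (z1 z2 z3 z4 : ℂ) : ℂ := Jfun (crossRatio z1 z2 z3 z4)

/-- The j-invariant of a triple of points of `ℂ` (fourth point at infinity). -/
noncomputable def jInv3 (z1 z2 z3 : ℂ) : ℂ := Jfun ((z1 - z3) / (z2 - z3))
/-! `jInv3` is invariant under all permutations of its arguments, because `Jfun` is invariant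
under `l ↦ l⁻¹` and `l ↦ 1 - l`. We may therefore evaluate it at the labelling `(c, b, a)`, whose
cross-ratio `t = (c - a) / (b - a)` satisfies `‖1 - t‖ < ‖t‖ < 1`. Writing `p = |t|²`, `q = |1 - t|²`,
one has `Im Jfun t = Im t · 4 (p - q)(p - 1)(q - 1)(pq + p + q) / (27 p² q²)`, and on that region
the second factor is positive. -/

theorem Jfun_inv (l : ℂ) : Jfun l⁻¹ = Jfun l := by
  rcases eq_or_ne l 0 with rfl | h0
  · simp
  rcases eq_or_ne l 1 with rfl | h1
  · simp
  have : l - 1 ≠ 0 := sub_ne_zero.mpr h1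
  unfold Jfun
  field_simp
  ring

theorem Jfun_one_sub (l : ℂ) : Jfun (1 - l) = Jfun l := by
  unfold Jfun
  ring

-- When two points coincide, both sides are the junk value `Jfun 0 = Jfun 1 = 0`.
theorem jInv3_swap12 (u v w : ℂ) : jInv3 v u w = jInv3 u v w := by
  rw [jInv3, ← inv_div, Jfun_inv, jInv3]

theorem jInv3_swap23 (u v w : ℂ) : jInv3 u w v = jInv3 u v w := by
  rcases eq_or_ne v w with rfl | hvw
  · rfl
  rw [jInv3, jInv3, ← Jfun_one_sub ((u - w) / (v - w))]
  congr 1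
  have : v - w ≠ 0 := sub_ne_zero.mpr hvw
  have : w - v ≠ 0 := sub_ne_zero.mpr hvw.symm
  field_simp
  ring

theorem jInv3_swap13 (u v w : ℂ) : jInv3 w v u = jInv3 u v w := by
  rw [jInv3_swap23, jInv3_swap12, jInv3_swap23]

theorem jInv3_eq_of_set_eq {z1 z2 z3 a b c : ℂ} (h12 : z1 ≠ z2) (h13 : z1 ≠ z3) (h23 : z2 ≠ z3)
    (hset : ({a, b, c} : Set ℂ) = {z1, z2, z3}) : jInv3 z1 z2 z3 = jInv3 a b c := by
  have hmem : ∀ z ∈ ({z1, z2, z3} : Set ℂ), z = a ∨ z = b ∨ z = c := by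
    rw [← hset]
    simp
  rcases hmem z1 (by simp) with rfl | rfl | rfl <;>
    rcases hmem z2 (by simp) with rfl | rfl | rfl <;>
    rcases hmem z3 (by simp) with rfl | rfl | rfl <;>
    first
    | contradiction
    | grind [jInv3_swap12, jInv3_swap23]

theorem Jfun_im (t : ℂ) :
    (Jfun t).im = t.im * (4 * (normSq t - normSq (1 - t)) *
      ((normSq t - 1) * (normSq (1 - t) - 1)) *
      (normSq t * normSq (1 - t) + normSq t + normSq (1 - t)) /
      (27 * normSq t ^ 2 * normSq (1 - t) ^ 2)) := by
  have hden : normSq (27 * t ^ 2 * (t - 1) ^ 2) =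
      27 * (27 * normSq t ^ 2 * normSq (1 - t) ^ 2) := by
    rw [← neg_sub 1 t]
    simp only [map_mul, map_pow, normSq_neg, normSq_ofNat]
    ring
  rw [Jfun, div_im, ← sub_div, hden, ← div_div, mul_div_assoc']
  congr 1
  rw [div_eq_iff (by norm_num)]
  simp only [normSq_apply, pow_succ, pow_zero, one_mul, mul_re, mul_im, sub_re, sub_im, add_re,
    add_im, one_re, one_im, re_ofNat, im_ofNat]
  ring

theorem Jfun_im_pos_iff {t : ℂ} (h1 : ‖1 - t‖ < ‖t‖) (h2 : ‖t‖ < 1) :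
    0 < (Jfun t).im ↔ 0 < t.im := by
  have hqp : normSq (1 - t) < normSq t := by
    simpa only [normSq_eq_norm_sq] using pow_lt_pow_left₀ h1 (norm_nonneg _) two_ne_zero
  have hp1 : normSq t < 1 := by
    simpa only [normSq_eq_norm_sq, one_pow] using pow_lt_pow_left₀ h2 (norm_nonneg _) two_ne_zero
  have hq0 : 0 < normSq (1 - t) := normSq_pos.mpr (sub_ne_zero.mpr fun h ↦ by simp [← h] at h2)
  have hp0 : 0 < normSq t := hq0.trans hqp
  have hpq : 0 < normSq t - normSq (1 - t) := sub_pos.mpr hqp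
  have hsgn : 0 < (normSq t - 1) * (normSq (1 - t) - 1) :=
    mul_pos_of_neg_of_neg (by linarith) (by linarith)
  rw [Jfun_im]
  exact mul_pos_iff_of_pos_right (by positivity)

theorem jInv3_im_pos_iff_of_norm_sub_lt {a b c : ℂ} (hlt1 : ‖b - c‖ < ‖c - a‖)
    (hlt2 : ‖c - a‖ < ‖a - b‖) : 0 < (jInv3 a b c).im ↔ 0 < ((c - a) / (b - a)).im := by
  have hba : 0 < ‖b - a‖ := by rw [norm_sub_rev]; exact (norm_nonneg _).trans_lt hlt2
  have hsub : 1 - (c - a) / (b - a) = (b - c) / (b - a) := by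
    field_simp [norm_pos_iff.mp hba]
    ring
  rw [← jInv3_swap13, jInv3]
  refine Jfun_im_pos_iff ?_ ?_
  · rw [hsub, norm_div, norm_div]
    exact div_lt_div_of_pos_right hlt1 hba
  · rw [norm_div, div_lt_one hba, norm_sub_rev b]
    exact hlt2

theorem jInv3_im_pos_iff_orientation_general (z1 z2 z3 a b c : ℂ)
    (h12 : z1 ≠ z2) (h13 : z1 ≠ z3) (h23 : z2 ≠ z3)
    (hset : ({a, b, c} : Set ℂ) = ({z1, z2, z3} : Set ℂ))
    (hlt1 : ‖b - c‖ < ‖c - a‖)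
    (hlt2 : ‖c - a‖ < ‖a - b‖) :
    0 < (jInv3 z1 z2 z3).im ↔ 0 < ((c - a) / (b - a)).im := by
  rw [jInv3_eq_of_set_eq h12 h13 h23 hset]
  exact jInv3_im_pos_iff_of_norm_sub_lt hlt1 hlt2

theorem jInv3_im_pos_iff_orientation (z1 z2 z3 a b c : ℂ)
    (h12 : z1 ≠ z2) (h13 : z1 ≠ z3) (h23 : z2 ≠ z3)
    (him : (jInv3 z1 z2 z3).im ≠ 0)
    (hset : ({a, b, c} : Set ℂ) = ({z1, z2, z3} : Set ℂ))
    (hlt1 : ‖b - c‖ < ‖c - a‖)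
    (hlt2 : ‖c - a‖ < ‖a - b‖) :
    0 < (jInv3 z1 z2 z3).im ↔ 0 < ((c - a) / (b - a)).im :=
  jInv3_im_pos_iff_orientation_general z1 z2 z3 a b c h12 h13 h23 hset hlt1 hlt2
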